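/- arXiv:2601.23245 — 2 statements merged into one kernel-verified Lean document; each statement's English description precedes it below -/
import Mathlib

section
/- Let λ be a partition with at most n parts and write δ_n = (n−1, n−2, …, 1, 0). (1) If the integers λ_i + n − i (1 ≤ i ≤ n) are not all of the same parity, then ∫ s_λ(x_1,…,x_n) = 0. (2) If λ = 2π + δ_n componentwise for a partition π (padded with zeros), then ∫ s_λ(x_1,…,x_n) = (−1)^{n(n−1)/2} · 2^{n−1} · s_π(x_1²,…,x_n²). (3) If λ = 2π + δ_n + (1,1,…,1) componentwise for a partition π, then ∫ s_λ(x_1,…,x_n) = (−1)^{n(n−1)/2} · 2^{n−1} · (x_1⋯x_n) · s_π(x_1²,…,x_n²). -/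
open MvPolynomial Finset

noncomputable section

abbrev Rn (n : ℕ) : Type := MvPolynomial (Fin n) ℚ
abbrev Kn (n : ℕ) : Type := FractionRing (Rn n)

/-- The canonical map from `R = ℚ[x_1,…,x_n]` to its fraction field. -/
def toK {n : ℕ} (f : Rn n) : Kn n := algebraMap (Rn n) (Kn n) f

/-- The action of a sign vector `σ ∈ {±1}^n` (encoded by `σ : Fin n → Bool`,
with `true ↦ −1` and `false ↦ +1`) on `R`, by `x_i ↦ σ_i x_i`. -/
def sgnAct {n : ℕ} (σ : Fin n → Bool) : Rn n →ₐ[ℚ] Rn n :=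
  aeval (fun i => if σ i then -X i else X i)

/-- The subgroup `K ⊂ {±1}^n` of sign vectors with `σ_1⋯σ_n = 1`, as a finite set. -/
def evenSigns (n : ℕ) : Finset (Fin n → Bool) :=
  univ.filter (fun σ => (∏ i : Fin n, (if σ i then (-1 : ℤ) else 1)) = 1)

/-- `𝔯 = (−1)^D ∏_{i<j} (x_i + x_j)` where `D = n(n−1)/2` (type `D_n`). -/
def frakrD (n : ℕ) : Rn n :=
  ((-1 : ℚ) ^ (n * (n - 1) / 2)) •
    ∏ p ∈ univ.filter (fun p : Fin n × Fin n => p.1 < p.2), (X p.1 + X p.2)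

/-- `∫f = Σ_{σ∈K} σ(f/𝔯)`, computed in the fraction field using
`σ(f/𝔯) = σ(f)/σ(𝔯)`. -/
def intD (n : ℕ) (f : Rn n) : Kn n :=
  ∑ σ ∈ evenSigns n, toK (sgnAct σ f) / toK (sgnAct σ (frakrD n))

/-- `η = 2^{−N}(x_1+⋯+x_n)^N` where `N = n(n−1)/2 + 1`. -/
def etaD (n : ℕ) : Rn n :=
  (((2 : ℚ) ^ (n * (n - 1) / 2 + 1))⁻¹) • (∑ i : Fin n, X i) ^ (n * (n - 1) / 2 + 1)

/-- `∂f = (1/2) Σ_i ∂f/∂x_i`. -/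
def pdD {n : ℕ} (f : Rn n) : Rn n := (1 / 2 : ℚ) • ∑ i : Fin n, pderiv i f

/-- `∇(f) = ∫(η·∂f)`. -/
def nablaD (n : ℕ) (f : Rn n) : Kn n := intD n (etaD n * pdD f)

/-- `Pf = x_1 x_2 ⋯ x_n`. -/
def Pf (n : ℕ) : Rn n := ∏ i : Fin n, X i

/-- The invariant ring `R^{W(D_n)} = ℚ[p_1^{(2)},…,p_{n−1}^{(2)}, Pf]`,
where `p_k^{(2)} = Σ_i x_i^{2k}`. -/
def algD (n : ℕ) : Subalgebra ℚ (Rn n) :=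
  Algebra.adjoin ℚ
    ((Set.range (fun k : Fin (n - 1) => ∑ i : Fin n, X i ^ (2 * ((k : ℕ) + 1)))) ∪ {Pf n})

/-- The ideal `I ⊂ R^{W(D_n)}` of elements with zero constant term. -/
def augD (n : ℕ) : Ideal ↥(algD n) :=
  RingHom.ker ((constantCoeff : Rn n →+* ℚ).comp (algD n).val.toRingHom)

/-- The alternant `a_α(y) = Σ_{ρ∈S_r} sgn(ρ) ∏_i y_{ρ(i)}^{α_i}`. -/
def alt {n : ℕ} (r : ℕ) (α : Fin r → ℕ) (y : Fin r → Rn n) : Rn n :=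
  ∑ ρ : Equiv.Perm (Fin r), ((Equiv.Perm.sign ρ : ℤ)) • ∏ i, y (ρ i) ^ (α i)

/-- The Schur polynomial `s_λ(y) = a_{λ+δ_r}(y)/a_{δ_r}(y)` as an element of the
fraction field. -/
def schurK {n : ℕ} (r : ℕ) (lam : Fin r → ℕ) (y : Fin r → Rn n) : Kn n :=
  toK (alt r (fun i => lam i + (r - 1 - (i : ℕ))) y) /
    toK (alt r (fun i => r - 1 - (i : ℕ)) y)

/-!
Multiplying numerator and denominator by the Vandermonde determinant `a_δ(x)` turns `𝔯 a_δ(x)`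
into `±a_δ(x²)`, which every sign change fixes, so `∫ s_λ = ±(Σ_{σ∈K} σ a_{λ+δ}(x)) / a_δ(x²)`.
A sign change multiplies the monomial `x^e` by the character `σ ↦ ∏ σ_i^{e_i}`, and the sum of this
character over the index-two subgroup `K` is `2^{n-1}` when all `e_i` have the same parity (the
character is then trivial on `K`) and `0` otherwise; writing the indicator of `K` as
`(1 + σ_1⋯σ_n)/2` turns it into two products of sums over `{±1}`. Finally `a_{2β}(x) = a_β(x²)` and
`a_{2β+1}(x) = x_1⋯x_n · a_β(x²)`.
-/

section SignCharacter

/-- Averaging over `K` scales the monomial `x^e` by this factor. -/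
def evenSignSum (R : Type*) [CommRing R] {n : ℕ} (e : Fin n → ℕ) : R :=
  ∑ σ ∈ evenSigns n, ∏ i, (if σ i then (-1 : R) else 1) ^ e i

variable {R : Type*} [CommRing R] {n : ℕ}

lemma prod_sign_eq_neg_one_pow (σ : Fin n → Bool) :
    ∏ i, (if σ i then (-1 : R) else 1) = (-1) ^ #{i | σ i} := by
  simp [prod_ite]

lemma mem_evenSigns_iff {σ : Fin n → Bool} : σ ∈ evenSigns n ↔ Even #{i | σ i} := by
  rw [evenSigns, mem_filter, prod_sign_eq_neg_one_pow, neg_one_pow_eq_one_iff_even (by decide)]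
  simp

lemma two_mul_sum_evenSigns (f : (Fin n → Bool) → R) :
    2 * ∑ σ ∈ evenSigns n, f σ = ∑ σ, (1 + ∏ i, if σ i then (-1 : R) else 1) * f σ := by
  have hind : ∀ σ, (1 + ∏ i, if σ i then (-1 : R) else 1) * f σ =
      if σ ∈ evenSigns n then 2 * f σ else 0 := by
    intro σ
    simp only [prod_sign_eq_neg_one_pow, mem_evenSigns_iff]
    split_ifs with h
    · rw [h.neg_one_pow, one_add_one_eq_two]
    · rw [(Nat.not_even_iff_odd.mp h).neg_one_pow, add_neg_cancel, zero_mul]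
  simp_rw [hind, sum_ite_mem, univ_inter, mul_sum]

lemma sum_prod_sign_pow (e : Fin n → ℕ) :
    ∑ σ : Fin n → Bool, ∏ i, (if σ i then (-1 : R) else 1) ^ e i = ∏ i, (1 + (-1) ^ e i) := by
  rw [← Fintype.prod_sum fun i (b : Bool) => (if b then (-1 : R) else 1) ^ e i]
  simp [add_comm]

lemma two_mul_evenSignSum (e : Fin n → ℕ) :
    2 * evenSignSum R e = ∏ i, (1 + (-1) ^ e i) + ∏ i, (1 - (-1) ^ e i) := by
  have hshift : ∀ σ : Fin n → Bool, (∏ i, if σ i then (-1 : R) else 1) *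
      ∏ i, (if σ i then (-1 : R) else 1) ^ e i =
        ∏ i, (if σ i then (-1 : R) else 1) ^ (e i + 1) := by
    intro σ
    simp only [← prod_mul_distrib, pow_succ']
  have hneg : ∀ i, (1 : R) + (-1) ^ (e i + 1) = 1 - (-1) ^ e i := fun i => by ring
  simp only [evenSignSum, two_mul_sum_evenSigns, add_mul, one_mul, sum_add_distrib, hshift,
    sum_prod_sign_pow, hneg]

variable [IsDomain R] [CharZero R]

lemma evenSignSum_of_even (hn : n ≠ 0) {e : Fin n → ℕ} (he : ∀ i, Even (e i)) :
    evenSignSum R e = 2 ^ (n - 1) := by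
  refine mul_left_cancel₀ (two_ne_zero (α := R)) ?_
  rw [two_mul_evenSignSum, ← pow_succ', Nat.sub_add_cancel (Nat.one_le_iff_ne_zero.mpr hn)]
  have hsign : ∀ i, (-1 : R) ^ e i = 1 := fun i => (he i).neg_one_pow
  simp [hsign, hn, one_add_one_eq_two]

lemma evenSignSum_of_odd (hn : n ≠ 0) {e : Fin n → ℕ} (he : ∀ i, Odd (e i)) :
    evenSignSum R e = 2 ^ (n - 1) := by
  refine mul_left_cancel₀ (two_ne_zero (α := R)) ?_
  rw [two_mul_evenSignSum, ← pow_succ', Nat.sub_add_cancel (Nat.one_le_iff_ne_zero.mpr hn)]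
  have hsign : ∀ i, (-1 : R) ^ e i = -1 := fun i => (he i).neg_one_pow
  simp [hsign, hn, one_add_one_eq_two]

lemma evenSignSum_eq_zero_of_mod_two_ne {e : Fin n → ℕ} {i j : Fin n} (h : e i % 2 ≠ e j % 2) :
    evenSignSum R e = 0 := by
  obtain ⟨k, l, hk, hl⟩ : ∃ k l, Odd (e k) ∧ Even (e l) := by
    simp only [Nat.odd_iff, Nat.even_iff]
    rcases Nat.mod_two_eq_zero_or_one (e i) with hi | hi
    · exact ⟨j, i, by omega, hi⟩
    · exact ⟨i, j, hi, by omega⟩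
  refine (mul_eq_zero.mp ?_).resolve_left two_ne_zero
  rw [two_mul_evenSignSum, prod_eq_zero (mem_univ k) (by simp [hk.neg_one_pow]),
    prod_eq_zero (mem_univ l) (by simp [hl.neg_one_pow]), add_zero]

end SignCharacter

section Alternant

variable {n : ℕ}

lemma map_alt {F : Type*} [FunLike F (Rn n) (Rn n)] [RingHomClass F (Rn n) (Rn n)] (φ : F)
    (r : ℕ) (α : Fin r → ℕ) (y : Fin r → Rn n) :
    φ (alt r α y) = alt r α fun i => φ (y i) := by
  simp [alt, map_sum, map_prod, map_pow]

lemma alt_eq_det (r : ℕ) (α : Fin r → ℕ) (y : Fin r → Rn n) :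
    alt r α y = (Matrix.of fun k i => y k ^ α i).det := by
  simp [alt, Matrix.det_apply, Units.smul_def]

lemma alt_two_mul (r : ℕ) (β : Fin r → ℕ) (y : Fin r → Rn n) :
    alt r (fun i => 2 * β i) y = alt r β fun i => y i ^ 2 := by
  simp only [alt, pow_mul]

lemma alt_two_mul_add_one (r : ℕ) (β : Fin r → ℕ) (y : Fin r → Rn n) :
    alt r (fun i => 2 * β i + 1) y = (∏ i, y i) * alt r β fun i => y i ^ 2 := by
  simp only [alt, mul_sum, mul_smul_comm]
  refine sum_congr rfl fun ρ _ => ?_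
  rw [← Equiv.prod_comp ρ y, ← prod_mul_distrib]
  congr 2
  ext i
  rw [pow_succ', pow_mul]

/-- Up to reversing the columns, `a_δ(y)` is a Vandermonde determinant. -/
lemma alt_delta (r : ℕ) (y : Fin r → Rn n) :
    alt r (fun i => r - 1 - (i : ℕ)) y =
      ((Equiv.Perm.sign (Fin.revPerm : Equiv.Perm (Fin r)) : ℤ) : Rn n) *
        ∏ i, ∏ j ∈ Ioi i, (y j - y i) := by
  have hrev : (Matrix.of fun k (i : Fin r) => y k ^ (r - 1 - (i : ℕ))) =
      (Matrix.vandermonde y).submatrix id Fin.revPerm := by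
    ext k i : 2
    simp only [Matrix.of_apply, Matrix.submatrix_apply, id, Fin.revPerm_apply,
      Matrix.vandermonde_apply, Fin.val_rev, Nat.sub_sub, add_comm 1]
  rw [alt_eq_det, hrev, Matrix.det_permute', Matrix.det_vandermonde]

lemma alt_delta_X_ne_zero :
    alt n (fun i => n - 1 - (i : ℕ)) (fun i => X i : Fin n → Rn n) ≠ 0 := by
  rw [alt_delta]
  refine mul_ne_zero (Int.cast_ne_zero.mpr (Units.ne_zero _)) ?_
  refine prod_ne_zero_iff.mpr fun i _ => prod_ne_zero_iff.mpr fun j hj => ?_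
  exact sub_ne_zero.mpr (X_injective.ne (mem_Ioi.mp hj).ne')

end Alternant

section SignAction

variable {n : ℕ}

lemma sgnAct_X (σ : Fin n → Bool) (i : Fin n) :
    sgnAct σ (X i) = (if σ i then -1 else 1) * X i := by
  simp only [sgnAct, aeval_X]
  split <;> simp

lemma sgnAct_X_sq (σ : Fin n → Bool) (i : Fin n) : sgnAct σ (X i ^ 2) = X i ^ 2 := by
  rw [map_pow, sgnAct_X, mul_pow]
  split <;> simp

lemma sgnAct_involutive (σ : Fin n → Bool) : Function.Involutive (sgnAct σ) := by
  have h : (sgnAct σ).comp (sgnAct σ) = AlgHom.id ℚ (Rn n) :=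
    algHom_ext fun i => by
      simp only [AlgHom.comp_apply, AlgHom.id_apply, sgnAct_X, map_mul]
      split <;> simp
  exact fun f => DFunLike.congr_fun h f

lemma sgnAct_prod_X_pow (σ : Fin n → Bool) (ρ : Equiv.Perm (Fin n)) (α : Fin n → ℕ) :
    sgnAct σ (∏ i, X (ρ i) ^ α i) =
      (∏ j, (if σ j then (-1 : Rn n) else 1) ^ α (ρ.symm j)) * ∏ i, X (ρ i) ^ α i := by
  simp only [map_prod, map_pow, sgnAct_X, mul_pow, prod_mul_distrib]
  rw [← Equiv.prod_comp ρ fun j => (if σ j then (-1 : Rn n) else 1) ^ α (ρ.symm j)]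
  simp

lemma sum_evenSigns_sgnAct_alt {α : Fin n → ℕ} (c : Rn n)
    (hc : ∀ ρ : Equiv.Perm (Fin n), evenSignSum (Rn n) (fun j => α (ρ.symm j)) = c) :
    ∑ σ ∈ evenSigns n, sgnAct σ (alt n α fun i => X i) = c * alt n α fun i => X i := by
  simp only [alt, map_sum, map_zsmul, sgnAct_prod_X_pow, mul_sum]
  rw [sum_comm]
  refine sum_congr rfl fun ρ _ => ?_
  rw [← smul_sum, ← sum_mul, ← hc ρ, mul_smul_comm]
  rfl

end SignAction

section Integral

variable {n : ℕ}

lemma frakrD_mul_alt_delta :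
    frakrD n * alt n (fun i => n - 1 - (i : ℕ)) (fun i => X i) =
      (-1) ^ (n * (n - 1) / 2) * alt n (fun i => n - 1 - (i : ℕ)) fun i => X i ^ 2 := by
  have hpairs : ∏ p ∈ univ.filter (fun p : Fin n × Fin n => p.1 < p.2), (X p.1 + X p.2 : Rn n) =
      ∏ i, ∏ j ∈ Ioi i, (X i + X j) :=
    prod_finset_product _ _ _ fun p => by simp
  have hsq : (∏ i : Fin n, ∏ j ∈ Ioi i, (X i + X j : Rn n)) * ∏ i, ∏ j ∈ Ioi i, (X j - X i) =
      ∏ i, ∏ j ∈ Ioi i, (X j ^ 2 - X i ^ 2) := by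
    rw [← prod_mul_distrib]
    refine prod_congr rfl fun i _ => ?_
    rw [← prod_mul_distrib]
    exact prod_congr rfl fun j _ => by ring
  rw [frakrD, Algebra.smul_def, hpairs, alt_delta, alt_delta]
  simp only [map_pow, map_neg, map_one]
  linear_combination ((-1) ^ (n * (n - 1) / 2) *
    ((Equiv.Perm.sign (Fin.revPerm : Equiv.Perm (Fin n)) : ℤ) : Rn n)) * hsq

lemma mul_alt_delta_eq_of_toK_eq_schurK {lam : Fin n → ℕ} {s : Rn n}
    (hs : toK s = schurK n lam fun i => X i) :
    s * alt n (fun i => n - 1 - (i : ℕ)) (fun i => X i) =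
      alt n (fun i => lam i + (n - 1 - (i : ℕ))) fun i => X i := by
  apply IsFractionRing.injective (Rn n) (Kn n)
  rw [map_mul]
  change toK s * toK _ = toK _
  rw [hs, schurK, div_mul_cancel₀]
  exact (map_ne_zero_iff _ (IsFractionRing.injective _ _)).mpr alt_delta_X_ne_zero

lemma intD_eq_of_mul_alt_delta {s a : Rn n}
    (h : s * alt n (fun i => n - 1 - (i : ℕ)) (fun i => X i) = a) :
    intD n s = (-1) ^ (n * (n - 1) / 2) * toK (∑ σ ∈ evenSigns n, sgnAct σ a) /
      toK (alt n (fun i => n - 1 - (i : ℕ)) fun i => X i ^ 2) := by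
  set D := n * (n - 1) / 2
  set A := alt n (fun i => n - 1 - (i : ℕ)) (fun i => X i)
  set A₂ := alt n (fun i => n - 1 - (i : ℕ)) fun i => X i ^ 2
  -- `𝔯 a_δ(x) = ±a_δ(x²)` only involves squares
  have hden : ∀ σ, sgnAct σ (frakrD n * A) = (-1) ^ D * A₂ := fun σ => by
    rw [frakrD_mul_alt_delta, map_mul, map_alt]
    simp only [sgnAct_X_sq]
    simp only [map_pow, map_neg, map_one, A₂, D]
  have hterm : ∀ σ, toK (sgnAct σ s) / toK (sgnAct σ (frakrD n)) =
      toK (sgnAct σ a) / ((-1) ^ D * toK A₂) := by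
    intro σ
    have hA : toK (sgnAct σ A) ≠ 0 := (map_ne_zero_iff _ (IsFractionRing.injective _ _)).mpr
      ((map_ne_zero_iff _ (sgnAct_involutive σ).injective).mpr alt_delta_X_ne_zero)
    rw [← mul_div_mul_right _ _ hA]
    simp only [toK, ← map_mul, h, hden]
    simp
  have hu : ((-1 : Kn n) ^ D)⁻¹ = (-1) ^ D := by rw [← inv_pow, inv_neg_one]
  simp only [intD, hterm, ← sum_div]
  simp only [toK, map_sum]
  rw [div_eq_mul_inv, div_eq_mul_inv, mul_inv, hu]
  ring

end Integral

theorem stmt_7_general (n : ℕ) (hn : 2 ≤ n) (lam : Fin n → ℕ)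
    (s : Rn n) (hs : toK s = schurK n lam (fun i => X i)) :
    ((¬ ∀ i j : Fin n,
        (lam i + (n - 1 - (i : ℕ))) % 2 = (lam j + (n - 1 - (j : ℕ))) % 2) →
      intD n s = 0) ∧
    (∀ π : Fin n → ℕ, Antitone π →
      (∀ i, lam i = 2 * π i + (n - 1 - (i : ℕ))) →
      intD n s = ((-1 : Kn n) ^ (n * (n - 1) / 2)) * (2 : Kn n) ^ (n - 1) *
        schurK n π (fun i => X i ^ 2)) ∧
    (∀ π : Fin n → ℕ, Antitone π →
      (∀ i, lam i = 2 * π i + (n - 1 - (i : ℕ)) + 1) →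
      intD n s = ((-1 : Kn n) ^ (n * (n - 1) / 2)) * (2 : Kn n) ^ (n - 1) *
        toK (Pf n) * schurK n π (fun i => X i ^ 2)) := by
  have hint := intD_eq_of_mul_alt_delta (mul_alt_delta_eq_of_toK_eq_schurK hs)
  have hn0 : n ≠ 0 := by omega
  refine ⟨fun hmix => ?_, fun π _ hπ => ?_, fun π _ hπ => ?_⟩
  · obtain ⟨i, j, hij⟩ : ∃ i j : Fin n, _ := by simpa only [not_forall] using hmix
    rw [hint, sum_evenSigns_sgnAct_alt 0 fun ρ =>
      evenSignSum_eq_zero_of_mod_two_ne (i := ρ i) (j := ρ j) (by simpa using hij)]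
    simp [toK]
  · have hα : (fun i : Fin n => lam i + (n - 1 - (i : ℕ))) =
        fun i => 2 * (π i + (n - 1 - (i : ℕ))) := funext fun i => by rw [hπ]; ring
    rw [hint, hα, sum_evenSigns_sgnAct_alt _ fun ρ =>
      evenSignSum_of_even hn0 fun j => even_two_mul _, alt_two_mul]
    simp only [schurK, toK, map_mul, map_pow, map_ofNat]
    ring
  · have hα : (fun i : Fin n => lam i + (n - 1 - (i : ℕ))) =
        fun i => 2 * (π i + (n - 1 - (i : ℕ))) + 1 := funext fun i => by rw [hπ]; ring
    rw [hint, hα, sum_evenSigns_sgnAct_alt _ fun ρ =>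
      evenSignSum_of_odd hn0 fun j => odd_two_mul_add_one _, alt_two_mul_add_one]
    simp only [schurK, toK, Pf, map_mul, map_pow, map_ofNat]
    ring

/-- for a partition `λ` with at most `n` parts, with
`δ_n = (n−1,…,1,0)`:
(1) if the `λ_i + (n−1−i)` are of mixed parity then `∫ s_λ = 0`;
(2) if `λ = 2π + δ_n` for a partition `π` then
    `∫ s_λ = (−1)^{n(n−1)/2} 2^{n−1} s_π(x_1²,…,x_n²)`;
(3) if `λ = 2π + δ_n + (1,…,1)` for a partition `π` then
    `∫ s_λ = (−1)^{n(n−1)/2} 2^{n−1} (x_1⋯x_n) s_π(x_1²,…,x_n²)`. -/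
theorem stmt_7 (n : ℕ) (hn : 2 ≤ n) (lam : Fin n → ℕ) (hlam : Antitone lam)
    (s : Rn n) (hs : toK s = schurK n lam (fun i => X i)) :
    ((¬ ∀ i j : Fin n,
        (lam i + (n - 1 - (i : ℕ))) % 2 = (lam j + (n - 1 - (j : ℕ))) % 2) →
      intD n s = 0) ∧
    (∀ π : Fin n → ℕ, Antitone π →
      (∀ i, lam i = 2 * π i + (n - 1 - (i : ℕ))) →
      intD n s = ((-1 : Kn n) ^ (n * (n - 1) / 2)) * (2 : Kn n) ^ (n - 1) *
        schurK n π (fun i => X i ^ 2)) ∧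
    (∀ π : Fin n → ℕ, Antitone π →
      (∀ i, lam i = 2 * π i + (n - 1 - (i : ℕ)) + 1) →
      intD n s = ((-1 : Kn n) ^ (n * (n - 1) / 2)) * (2 : Kn n) ^ (n - 1) *
        toK (Pf n) * schurK n π (fun i => X i ^ 2)) :=
  stmt_7_general n hn lam s hs

end
end

section
/- For n = 4, there is no rational number ε such that ∇(Pf) − ε·Pf ∈ I²; in other words, the image of Pf in I/I² is not an eigenvector of the operator induced by ∇. -/
open MvPolynomial Finset

noncomputable section

def W4 : Rn 4 := (X 0 + X 1 + X 2 + X 3)^7 *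
  (X 1*X 2*X 3 + X 0*X 2*X 3 + X 0*X 1*X 3 + X 0*X 1*X 2)
def Δ4 : Rn 4 := (X 0^2 - X 1^2)*(X 0^2 - X 2^2)*(X 0^2 - X 3^2)*(X 1^2 - X 2^2)*
  (X 1^2 - X 3^2)*(X 2^2 - X 3^2)
def Ghat : Rn 4 := 80*(X 0^2+X 1^2+X 2^2+X 3^2)^2 - 32*(X 0^4+X 1^4+X 2^4+X 3^4)
  + 896*(X 0*X 1*X 2*X 3)
def sg0 : Fin 4 → Bool := ![false, false, false, false]
def cc0 : Rn 4 := (X 0 - X 1)*(X 0 - X 2)*(X 0 - X 3)*(X 1 - X 2)*(X 1 - X 3)*(X 2 - X 3)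
def sg1 : Fin 4 → Bool := ![false, false, true, true]
def cc1 : Rn 4 := (-1)*((X 0 - X 1)*(X 0 + X 2)*(X 0 + X 3)*(X 1 + X 2)*(X 1 + X 3)*(X 2 - X 3))
def sg2 : Fin 4 → Bool := ![false, true, false, true]
def cc2 : Rn 4 := (X 0 + X 1)*(X 0 - X 2)*(X 0 + X 3)*(X 1 + X 2)*(X 1 - X 3)*(X 2 + X 3)
def sg3 : Fin 4 → Bool := ![false, true, true, false]
def cc3 : Rn 4 := (-1)*((X 0 + X 1)*(X 0 + X 2)*(X 0 - X 3)*(X 1 - X 2)*(X 1 + X 3)*(X 2 + X 3))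
def sg4 : Fin 4 → Bool := ![true, false, false, true]
def cc4 : Rn 4 := (-1)*((X 0 + X 1)*(X 0 + X 2)*(X 0 - X 3)*(X 1 - X 2)*(X 1 + X 3)*(X 2 + X 3))
def sg5 : Fin 4 → Bool := ![true, false, true, false]
def cc5 : Rn 4 := (X 0 + X 1)*(X 0 - X 2)*(X 0 + X 3)*(X 1 + X 2)*(X 1 - X 3)*(X 2 + X 3)
def sg6 : Fin 4 → Bool := ![true, true, false, false]
def cc6 : Rn 4 := (-1)*((X 0 - X 1)*(X 0 + X 2)*(X 0 + X 3)*(X 1 + X 2)*(X 1 + X 3)*(X 2 - X 3))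
def sg7 : Fin 4 → Bool := ![true, true, true, true]
def cc7 : Rn 4 := (X 0 - X 1)*(X 0 - X 2)*(X 0 - X 3)*(X 1 - X 2)*(X 1 - X 3)*(X 2 - X 3)

lemma evens : evenSigns 4 = {sg0, sg1, sg2, sg3, sg4, sg5, sg6, sg7} := by decide

lemma frakr4 : frakrD 4 =
    (X 0 + X 1)*((X 0 + X 2)*((X 0 + X 3)*((X 1 + X 2)*((X 1 + X 3)*(X 2 + X 3))))) := by
  rw [frakrD, show (univ.filter (fun p : Fin 4 × Fin 4 => p.1 < p.2)) =
    {(0,1),(0,2),(0,3),(1,2),(1,3),(2,3)} from by decide]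
  norm_num
  rw [Finset.prod_insert (by decide), Finset.prod_insert (by decide),
    Finset.prod_insert (by decide), Finset.prod_insert (by decide),
    Finset.prod_insert (by decide), Finset.prod_singleton]

lemma fac_ne (i j : Fin 4) (h : j ≠ i) : (X i^2 - X j^2 : Rn 4) ≠ 0 := by
  intro hc
  have h2 : (X i^2 : Rn 4) = X j^2 := by linear_combination hc
  have := congrArg (eval (fun k => if k = i then (1:ℚ) else 0)) h2
  simp [h] at this

lemma Δ4_ne : Δ4 ≠ 0 := by
  refine mul_ne_zero (mul_ne_zero (mul_ne_zero (mul_ne_zero (mul_ne_zero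
    (fac_ne _ _ (by decide)) (fac_ne _ _ (by decide))) (fac_ne _ _ (by decide)))
    (fac_ne _ _ (by decide))) (fac_ne _ _ (by decide))) (fac_ne _ _ (by decide))

lemma toK_ne {p : Rn 4} (h : p ≠ 0) : toK p ≠ 0 := by
  simpa [toK, IsFractionRing.to_map_eq_zero_iff] using h

lemma hF : etaD 4 * pdD (Pf 4) = C (1/256 : ℚ) * W4 := by
  have heta : etaD 4 = C (1/128:ℚ) * (X 0 + X 1 + X 2 + X 3)^7 := by
    rw [etaD, smul_eq_C_mul]
    norm_num [Fin.sum_univ_four]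
  have hpd : pdD (Pf 4) = C (1/2:ℚ) *
      (X 1*X 2*X 3 + X 0*X 2*X 3 + X 0*X 1*X 3 + X 0*X 1*X 2) := by
    rw [pdD, smul_eq_C_mul, Fin.sum_univ_four]
    congr 1
    simp [Pf, Fin.prod_univ_four, pderiv_mul, pderiv_X_self, pderiv_X_of_ne]
    ring
  rw [heta, hpd, W4]
  rw [mul_mul_mul_comm, ← C_mul]
  norm_num

lemma hB0 : sgnAct sg0 (frakrD 4) * cc0 = Δ4 := by
  rw [frakr4]
  simp only [sgnAct, sg0, cc0, Δ4, map_mul, map_add, aeval_X, Matrix.cons_val_zero,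
    Matrix.cons_val_one, Matrix.head_cons, Matrix.cons_val_two, Matrix.tail_cons,
    Matrix.cons_val_three, Bool.false_eq_true, if_false, if_true]
  ring
lemma hB1 : sgnAct sg1 (frakrD 4) * cc1 = Δ4 := by
  rw [frakr4]
  simp only [sgnAct, sg1, cc1, Δ4, map_mul, map_add, aeval_X, Matrix.cons_val_zero,
    Matrix.cons_val_one, Matrix.head_cons, Matrix.cons_val_two, Matrix.tail_cons,
    Matrix.cons_val_three, Bool.false_eq_true, if_false, if_true]
  ring
lemma hB2 : sgnAct sg2 (frakrD 4) * cc2 = Δ4 := by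
  rw [frakr4]
  simp only [sgnAct, sg2, cc2, Δ4, map_mul, map_add, aeval_X, Matrix.cons_val_zero,
    Matrix.cons_val_one, Matrix.head_cons, Matrix.cons_val_two, Matrix.tail_cons,
    Matrix.cons_val_three, Bool.false_eq_true, if_false, if_true]
  ring
lemma hB3 : sgnAct sg3 (frakrD 4) * cc3 = Δ4 := by
  rw [frakr4]
  simp only [sgnAct, sg3, cc3, Δ4, map_mul, map_add, aeval_X, Matrix.cons_val_zero,
    Matrix.cons_val_one, Matrix.head_cons, Matrix.cons_val_two, Matrix.tail_cons,
    Matrix.cons_val_three, Bool.false_eq_true, if_false, if_true]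
  ring
lemma hB4 : sgnAct sg4 (frakrD 4) * cc4 = Δ4 := by
  rw [frakr4]
  simp only [sgnAct, sg4, cc4, Δ4, map_mul, map_add, aeval_X, Matrix.cons_val_zero,
    Matrix.cons_val_one, Matrix.head_cons, Matrix.cons_val_two, Matrix.tail_cons,
    Matrix.cons_val_three, Bool.false_eq_true, if_false, if_true]
  ring
lemma hB5 : sgnAct sg5 (frakrD 4) * cc5 = Δ4 := by
  rw [frakr4]
  simp only [sgnAct, sg5, cc5, Δ4, map_mul, map_add, aeval_X, Matrix.cons_val_zero,
    Matrix.cons_val_one, Matrix.head_cons, Matrix.cons_val_two, Matrix.tail_cons,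
    Matrix.cons_val_three, Bool.false_eq_true, if_false, if_true]
  ring
lemma hB6 : sgnAct sg6 (frakrD 4) * cc6 = Δ4 := by
  rw [frakr4]
  simp only [sgnAct, sg6, cc6, Δ4, map_mul, map_add, aeval_X, Matrix.cons_val_zero,
    Matrix.cons_val_one, Matrix.head_cons, Matrix.cons_val_two, Matrix.tail_cons,
    Matrix.cons_val_three, Bool.false_eq_true, if_false, if_true]
  ring
lemma hB7 : sgnAct sg7 (frakrD 4) * cc7 = Δ4 := by
  rw [frakr4]
  simp only [sgnAct, sg7, cc7, Δ4, map_mul, map_add, aeval_X, Matrix.cons_val_zero,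
    Matrix.cons_val_one, Matrix.head_cons, Matrix.cons_val_two, Matrix.tail_cons,
    Matrix.cons_val_three, Bool.false_eq_true, if_false, if_true]
  ring

lemma sgnAct_C (σ : Fin 4 → Bool) (q : ℚ) : sgnAct σ (C q) = C q := by
  simp [sgnAct]

lemma term_eq (σ : Fin 4 → Bool) (c : Rn 4) (hB : sgnAct σ (frakrD 4) * c = Δ4) :
    toK (sgnAct σ (etaD 4 * pdD (Pf 4))) / toK (sgnAct σ (frakrD 4))
      = toK (C (1/256:ℚ)) * (toK (sgnAct σ W4 * c) / toK Δ4) := by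
  have hBne : sgnAct σ (frakrD 4) ≠ 0 := by
    intro h0
    exact Δ4_ne (by rw [← hB, h0, zero_mul])
  have toK_mul : ∀ a b : Rn 4, toK (a*b) = toK a * toK b := fun a b => map_mul _ a b
  rw [hF, map_mul, sgnAct_C, toK_mul, mul_div_assoc]
  refine congrArg (toK (C (1/256:ℚ)) * ·) ?_
  rw [div_eq_div_iff (toK_ne hBne) (toK_ne Δ4_ne), ← toK_mul, ← toK_mul]
  refine congrArg toK ?_
  rw [← hB]; ring

lemma master : sgnAct sg0 W4 * cc0 + sgnAct sg1 W4 * cc1 + sgnAct sg2 W4 * cc2 + sgnAct sg3 W4 * cc3 + sgnAct sg4 W4 * cc4 + sgnAct sg5 W4 * cc5 + sgnAct sg6 W4 * cc6 + sgnAct sg7 W4 * cc7 = Ghat * Δ4 := by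
  simp only [W4, sgnAct, map_mul, map_add, map_pow, aeval_X]
  simp only [sg0, cc0, sg1, cc1, sg2, cc2, sg3, cc3, sg4, cc4, sg5, cc5, sg6, cc6, sg7, cc7, Ghat, Δ4,
    Matrix.cons_val_zero, Matrix.cons_val_one, Matrix.head_cons, Matrix.cons_val_two,
    Matrix.tail_cons, Matrix.cons_val_three, Bool.false_eq_true, if_false, if_true]
  ring


def ph1 : Rn 4 →ₐ[ℚ] Polynomial ℚ := aeval ![Polynomial.X, Polynomial.X, 0, 0]
def ph2 : Rn 4 →ₐ[ℚ] Polynomial ℚ := aeval ![Polynomial.X, 0, 0, 0]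

def Qp (a : Rn 4) : Prop :=
  (ph1 a).coeff 0 = constantCoeff a ∧ (ph2 a).coeff 0 = constantCoeff a ∧
  (ph1 a).coeff 1 = 0 ∧ (ph2 a).coeff 1 = 0 ∧ (ph1 a).coeff 3 = 0 ∧ (ph2 a).coeff 3 = 0 ∧
  (ph1 a).coeff 2 = 2 * (ph2 a).coeff 2

lemma coeff_mul_one' (p q : Polynomial ℚ) :
    (p*q).coeff 1 = p.coeff 0 * q.coeff 1 + p.coeff 1 * q.coeff 0 := by
  rw [Polynomial.coeff_mul, Finset.Nat.sum_antidiagonal_eq_sum_range_succ_mk]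
  simp [Finset.sum_range_succ]

lemma coeff_mul_two' (p q : Polynomial ℚ) :
    (p*q).coeff 2 = p.coeff 0 * q.coeff 2 + p.coeff 1 * q.coeff 1 + p.coeff 2 * q.coeff 0 := by
  rw [Polynomial.coeff_mul, Finset.Nat.sum_antidiagonal_eq_sum_range_succ_mk]
  simp [Finset.sum_range_succ]

lemma coeff_mul_three' (p q : Polynomial ℚ) :
    (p*q).coeff 3 = p.coeff 0 * q.coeff 3 + p.coeff 1 * q.coeff 2 + p.coeff 2 * q.coeff 1
      + p.coeff 3 * q.coeff 0 := by
  rw [Polynomial.coeff_mul, Finset.Nat.sum_antidiagonal_eq_sum_range_succ_mk]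
  simp [Finset.sum_range_succ]

lemma coeff_mul_four' (p q : Polynomial ℚ) :
    (p*q).coeff 4 = p.coeff 0 * q.coeff 4 + p.coeff 1 * q.coeff 3 + p.coeff 2 * q.coeff 2
      + p.coeff 3 * q.coeff 1 + p.coeff 4 * q.coeff 0 := by
  rw [Polynomial.coeff_mul, Finset.Nat.sum_antidiagonal_eq_sum_range_succ_mk]
  simp [Finset.sum_range_succ]

lemma Qp_all : ∀ a ∈ algD 4, Qp a := by
  intro a ha
  induction ha using Algebra.adjoin_induction with
  | mem x hx =>
    rcases hx with ⟨k, rfl⟩ | hx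
    · fin_cases k <;>
        simp [Qp, ph1, ph2, Fin.sum_univ_four] <;>
        norm_num [Polynomial.coeff_X_pow]
    · simp only [Set.mem_singleton_iff] at hx
      subst hx
      simp [Qp, Pf, ph1, ph2, Fin.prod_univ_four]
  | algebraMap r =>
    simp [Qp, ph1, ph2, MvPolynomial.algebraMap_eq]
  | add x y hx hy qx qy =>
    obtain ⟨a1,a2,a3,a4,a5,a6,a7⟩ := qx
    obtain ⟨b1,b2,b3,b4,b5,b6,b7⟩ := qy
    refine ⟨?_,?_,?_,?_,?_,?_,?_⟩ <;>
      simp [map_add, Polynomial.coeff_add, a1,a2,a3,a4,a5,a6,a7,b1,b2,b3,b4,b5,b6,b7] <;> ring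
  | mul x y hx hy qx qy =>
    obtain ⟨a1,a2,a3,a4,a5,a6,a7⟩ := qx
    obtain ⟨b1,b2,b3,b4,b5,b6,b7⟩ := qy
    refine ⟨?_,?_,?_,?_,?_,?_,?_⟩ <;>
      simp only [map_mul, coeff_mul_one', coeff_mul_two', coeff_mul_three',
        Polynomial.mul_coeff_zero, a1,a2,a3,a4,a5,a6,a7,b1,b2,b3,b4,b5,b6,b7] <;> ring

def P1v : Rn 4 := ∑ i : Fin 4, X i ^ 2
def P2v : Rn 4 := ∑ i : Fin 4, X i ^ 4
def gval : Rn 4 := (5/16 : ℚ) • (P1v * P1v) - (1/8 : ℚ) • P2v + (7/2 : ℚ) • Pf 4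

lemma P1v_mem : P1v ∈ algD 4 :=
  Algebra.subset_adjoin (Or.inl ⟨0, by norm_num [P1v]⟩)
lemma P2v_mem : P2v ∈ algD 4 :=
  Algebra.subset_adjoin (Or.inl ⟨1, by norm_num [P2v]⟩)
lemma Pf_mem : Pf 4 ∈ algD 4 := Algebra.subset_adjoin (Or.inr rfl)
lemma gval_mem : gval ∈ algD 4 := by
  exact add_mem (sub_mem ((algD 4).smul_mem (mul_mem P1v_mem P1v_mem) _)
    ((algD 4).smul_mem P2v_mem _)) ((algD 4).smul_mem Pf_mem _)

set_option synthInstance.maxHeartbeats 1000000 in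
lemma Lzero : ∀ h ∈ (augD 4) ^ 2,
    (ph1 (h : Rn 4)).coeff 4 - 4 * (ph2 (h : Rn 4)).coeff 4 = 0 := by
  intro h hmem
  rw [pow_two] at hmem
  refine Submodule.mul_induction_on hmem ?_ ?_
  · intro a ha b hb
    obtain ⟨a1,a2,a3,a4,a5,a6,a7⟩ := Qp_all _ a.2
    obtain ⟨b1,b2,b3,b4,b5,b6,b7⟩ := Qp_all _ b.2
    have ha0 : constantCoeff (a : Rn 4) = 0 := ha
    have hb0 : constantCoeff (b : Rn 4) = 0 := hb
    rw [Subalgebra.coe_mul, map_mul, map_mul, coeff_mul_four', coeff_mul_four',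
      a1,a2,a3,a4,a5,a6,a7,b1,b2,b3,b4,b5,b6,b7, ha0, hb0]
    ring
  · intro x y hx hy
    rw [Subalgebra.coe_add, map_add, map_add, Polynomial.coeff_add, Polynomial.coeff_add]
    linarith

lemma no_eps : ¬ ∃ ε : ℚ, (⟨gval, gval_mem⟩ : ↥(algD 4)) - ε • ⟨Pf 4, Pf_mem⟩ ∈ (augD 4) ^ 2 := by
  rintro ⟨ε, hmem⟩
  have h0 := Lzero _ hmem
  have hcoe : ((⟨gval, gval_mem⟩ - ε • ⟨Pf 4, Pf_mem⟩ : ↥(algD 4)) : Rn 4)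
      = gval - ε • Pf 4 := rfl
  rw [hcoe] at h0
  have hP1 : ph1 P1v = Polynomial.X^2 + Polynomial.X^2 := by simp [ph1, P1v, Fin.sum_univ_four]
  have hP2 : ph1 P2v = Polynomial.X^4 + Polynomial.X^4 := by simp [ph1, P2v, Fin.sum_univ_four]
  have hPf : ph1 (Pf 4) = 0 := by simp [ph1, Pf, Fin.prod_univ_four]
  have kP1 : ph2 P1v = Polynomial.X^2 := by simp [ph2, P1v, Fin.sum_univ_four]
  have kP2 : ph2 P2v = Polynomial.X^4 := by simp [ph2, P2v, Fin.sum_univ_four]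
  have kPf : ph2 (Pf 4) = 0 := by simp [ph2, Pf, Fin.prod_univ_four]
  have c14 : (ph1 (gval - ε • Pf 4)).coeff 4 = 1 := by
    rw [map_sub, map_smul, hPf, gval, map_add, map_sub, map_smul, map_smul, map_smul,
      map_mul, hP1, hP2, hPf]
    simp [Polynomial.coeff_smul, coeff_mul_four', Polynomial.coeff_X_pow]
    norm_num
  have c24 : (ph2 (gval - ε • Pf 4)).coeff 4 = 3/16 := by
    rw [map_sub, map_smul, kPf, gval, map_add, map_sub, map_smul, map_smul, map_smul,
      map_mul, kP1, kP2, kPf]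
    simp [Polynomial.coeff_smul, coeff_mul_four', Polynomial.coeff_X_pow]
    norm_num
  rw [c14, c24] at h0
  norm_num at h0

set_option maxHeartbeats 1000000 in
lemma hgG : C (1/256 : ℚ) * Ghat = gval := by
  rw [gval, P1v, P2v, Pf, Fin.sum_univ_four, Fin.sum_univ_four, Fin.prod_univ_four,
    smul_eq_C_mul, smul_eq_C_mul, smul_eq_C_mul, Ghat,
    show (80 : Rn 4) = C (80:ℚ) from (map_ofNat (C : ℚ →+* Rn 4) 80).symm,
    show (32 : Rn 4) = C (32:ℚ) from (map_ofNat (C : ℚ →+* Rn 4) 32).symm,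
    show (896 : Rn 4) = C (896:ℚ) from (map_ofNat (C : ℚ →+* Rn 4) 896).symm]
  simp only [mul_sub, mul_add, ← mul_assoc, ← C_mul]
  norm_num
  ring

set_option maxHeartbeats 2000000 in
set_option synthInstance.maxHeartbeats 1000000 in
lemma toK_gval : toK gval = nablaD 4 (Pf 4) := by
  rw [nablaD, intD, evens]
  rw [Finset.sum_insert (by decide), Finset.sum_insert (by decide),
    Finset.sum_insert (by decide), Finset.sum_insert (by decide),
    Finset.sum_insert (by decide), Finset.sum_insert (by decide),
    Finset.sum_insert (by decide), Finset.sum_singleton]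
  rw [term_eq sg0 cc0 hB0, term_eq sg1 cc1 hB1, term_eq sg2 cc2 hB2, term_eq sg3 cc3 hB3,
    term_eq sg4 cc4 hB4, term_eq sg5 cc5 hB5, term_eq sg6 cc6 hB6, term_eq sg7 cc7 hB7]
  have hd : toK Δ4 ≠ 0 := toK_ne Δ4_ne
  have key : toK (sgnAct sg0 W4 * cc0) + toK (sgnAct sg1 W4 * cc1) + toK (sgnAct sg2 W4 * cc2)
      + toK (sgnAct sg3 W4 * cc3) + toK (sgnAct sg4 W4 * cc4) + toK (sgnAct sg5 W4 * cc5)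
      + toK (sgnAct sg6 W4 * cc6) + toK (sgnAct sg7 W4 * cc7) = toK Ghat * toK Δ4 := by
    simp only [toK, ← map_add, ← map_mul]
    exact congrArg _ master
  have expand : toK (C (1/256:ℚ)) * (toK (sgnAct sg0 W4 * cc0) / toK Δ4)
      + (toK (C (1/256:ℚ)) * (toK (sgnAct sg1 W4 * cc1) / toK Δ4)
      + (toK (C (1/256:ℚ)) * (toK (sgnAct sg2 W4 * cc2) / toK Δ4)
      + (toK (C (1/256:ℚ)) * (toK (sgnAct sg3 W4 * cc3) / toK Δ4)
      + (toK (C (1/256:ℚ)) * (toK (sgnAct sg4 W4 * cc4) / toK Δ4)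
      + (toK (C (1/256:ℚ)) * (toK (sgnAct sg5 W4 * cc5) / toK Δ4)
      + (toK (C (1/256:ℚ)) * (toK (sgnAct sg6 W4 * cc6) / toK Δ4)
      + toK (C (1/256:ℚ)) * (toK (sgnAct sg7 W4 * cc7) / toK Δ4)))))))
      = toK (C (1/256:ℚ)) * ((toK (sgnAct sg0 W4 * cc0) + toK (sgnAct sg1 W4 * cc1)
        + toK (sgnAct sg2 W4 * cc2) + toK (sgnAct sg3 W4 * cc3) + toK (sgnAct sg4 W4 * cc4)
        + toK (sgnAct sg5 W4 * cc5) + toK (sgnAct sg6 W4 * cc6) + toK (sgnAct sg7 W4 * cc7))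
          / toK Δ4) := by
    ring
  rw [expand, key, mul_div_cancel_right₀ _ hd]
  have hm : toK (C (1/256:ℚ) * Ghat) = toK (C (1/256:ℚ)) * toK Ghat :=
    map_mul (algebraMap (Rn 4) (Kn 4)) _ _
  exact (congrArg toK hgG).symm.trans hm

/-- for `n = 4`, there is no rational `ε` with `∇(Pf) − ε·Pf ∈ I²`:
the image of `Pf` in `I/I²` is not an eigenvector of the operator induced by `∇`. -/
theorem stmt_13 :
    ∃ g pf : ↥(algD 4),
      toK (g : Rn 4) = nablaD 4 (Pf 4) ∧
      (pf : Rn 4) = Pf 4 ∧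
      ¬ ∃ ε : ℚ, g - ε • pf ∈ (augD 4) ^ 2 := by
  exact ⟨⟨gval, gval_mem⟩, ⟨Pf 4, Pf_mem⟩, toK_gval, rfl, no_eps⟩

end
end
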